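/- Let p = softmax(z) with z ∈ ℝ^s, and let 𝒞 be the index set of the N_c largest entries of z. Then the missed attention mass satisfies Σ_{i∉𝒞} p_i ≤ (s − N_c) · exp(−Δ) / (N_c + (s − N_c)·exp(−Δ)), where Δ = min_{i∈𝒞} z_i − max_{j∉𝒞} z_j ≥ 0 is the score gap. -/
import Mathlib


open Finset

/-- Missed attention mass bound: if `𝒞` is the index set of the `N_c` largest
pre-softmax scores and `Δ` is the score gap, the softmax mass outside `𝒞` is at
most `(s − N_c)·e^{−Δ} / (N_c + (s − N_c)·e^{−Δ})`, and `Δ ≥ 0`. -/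
theorem topk_missed_mass_bound
    (s : ℕ) (z : Fin s → ℝ)
    (p : Fin s → ℝ)
    (hp : ∀ i, p i = Real.exp (z i) / ∑ j, Real.exp (z j))
    (C : Finset (Fin s)) (Nc : ℕ) (hcard : C.card = Nc)
    (hCne : C.Nonempty) (hCcne : Cᶜ.Nonempty)
    (htop : ∀ i ∈ C, ∀ j ∉ C, z j ≤ z i)
    (Δ : ℝ) (hΔ : Δ = C.inf' hCne z - Cᶜ.sup' hCcne z) :
    0 ≤ Δ ∧
    ∑ j ∈ Cᶜ, p j
      ≤ ((s : ℝ) - Nc) * Real.exp (-Δ)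
          / ((Nc : ℝ) + ((s : ℝ) - Nc) * Real.exp (-Δ)) := by
  set m := C.inf' hCne z with hmdef
  set M := Cᶜ.sup' hCcne z with hMdef
  obtain ⟨j0, hj0⟩ := hCcne
  have hMle : M ≤ m := by
    apply Finset.sup'_le
    intro j hj
    apply Finset.le_inf'
    intro i hi
    exact htop i hi j (Finset.mem_compl.mp hj)
  have hΔ0 : 0 ≤ Δ := by rw [hΔ]; linarith
  refine ⟨hΔ0, ?_⟩
  set A := ∑ i ∈ C, Real.exp (z i) with hAdef
  set B := ∑ j ∈ Cᶜ, Real.exp (z j) with hBdef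
  have hSsum : ∑ j, Real.exp (z j) = A + B := (Finset.sum_add_sum_compl C _).symm
  have hApos : 0 < A := Finset.sum_pos (fun i _ => Real.exp_pos _) hCne
  have hBpos : 0 < B := Finset.sum_pos (fun i _ => Real.exp_pos _) ⟨j0, hj0⟩
  have hNc1 : 1 ≤ Nc := by
    rw [← hcard]; exact Finset.card_pos.mpr hCne
  have hNcs : Nc ≤ s := by
    rw [← hcard]; simpa using Finset.card_le_card (Finset.subset_univ C)
  have hcc : (Cᶜ.card : ℝ) = (s : ℝ) - Nc := by
    have : Cᶜ.card = s - Nc := by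
      rw [Finset.card_compl, hcard]; simp
    rw [this, Nat.cast_sub hNcs]
  have hsc : (0:ℝ) < (s : ℝ) - Nc := by
    rw [← hcc]
    exact_mod_cast Finset.card_pos.mpr ⟨j0, hj0⟩
  have hB : B ≤ ((s:ℝ) - Nc) * Real.exp M := by
    calc B ≤ ∑ _j ∈ Cᶜ, Real.exp M := by
              apply Finset.sum_le_sum
              intro j hj
              exact Real.exp_le_exp.mpr (Finset.le_sup' z hj)
      _ = ((s:ℝ) - Nc) * Real.exp M := by rw [Finset.sum_const, nsmul_eq_mul, hcc]
  have hA : (Nc:ℝ) * Real.exp m ≤ A := by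
    calc (Nc:ℝ) * Real.exp m = ∑ _i ∈ C, Real.exp m := by
              rw [Finset.sum_const, nsmul_eq_mul, hcard]
      _ ≤ A := by
              apply Finset.sum_le_sum
              intro i hi
              exact Real.exp_le_exp.mpr (Finset.inf'_le z hi)
  have hexp : Real.exp (-Δ) * Real.exp m = Real.exp M := by
    rw [hΔ, ← Real.exp_add]; ring_nf
  have hNcpos : (0:ℝ) < (Nc:ℝ) := by exact_mod_cast hNc1
  have hDpos : (0:ℝ) < (Nc : ℝ) + ((s : ℝ) - Nc) * Real.exp (-Δ) :=
    add_pos hNcpos (mul_pos hsc (Real.exp_pos _))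
  have hsum : ∑ j ∈ Cᶜ, p j = B / (A + B) := by
    rw [hBdef, Finset.sum_div]
    apply Finset.sum_congr rfl
    intro j _
    rw [hp j, hSsum]
  rw [hsum, div_le_div_iff₀ (by linarith) hDpos]
  have key : B * Nc ≤ ((s:ℝ) - Nc) * Real.exp (-Δ) * A := by
    calc B * Nc ≤ (((s:ℝ) - Nc) * Real.exp M) * Nc := by
            apply mul_le_mul_of_nonneg_right hB (le_of_lt hNcpos)
      _ = ((s:ℝ) - Nc) * Real.exp (-Δ) * ((Nc:ℝ) * Real.exp m) := by
            rw [← hexp]; ring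
      _ ≤ ((s:ℝ) - Nc) * Real.exp (-Δ) * A := by
            apply mul_le_mul_of_nonneg_left hA
            positivity
  nlinarith [mul_pos hsc (Real.exp_pos (-Δ)), hBpos]
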